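/- Let r ≥ 4 be an integer and let (p̃, q̃) be the balanced split of r. For integers p ≥ q ≥ 2 with p + q = r, define g(p, q) = 4 / (√(E(p) + E(q)) + √(E(p) + E_s(q)))². Then: (1) for every real α > 0, 4α² / ((1 + α²(E(p) + E(q)))·(1 + α²(E(p) + E_s(q)))) ≤ g(p, q), with equality when α = ((E(p) + E(q))·(E(p) + E_s(q)))^{−1/4}; and (2) g(p, q) ≤ g(p̃, q̃). In other words, among all splits p + q = r with p ≥ q ≥ 2, the optimal coding gain of the unitary training code built from the 2^p-ary and 2^q-ary QAM constellations is maximized by the balanced split, with the stated optimal energy scale. -/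
import Mathlib


/-- `Eng K` is the largest squared modulus of a point of the modified
`2^K`-ary QAM constellation. -/
noncomputable def Eng (K : ℕ) : ℝ :=
  if K = 2 then 2
  else if K = 3 then 10
  else if K % 2 = 0 then 2 * ((2 : ℝ) ^ (K / 2) - 1) ^ 2
  else ((2 : ℝ) ^ ((K - 1) / 2) - 1) ^ 2 + (3 * (2 : ℝ) ^ ((K - 3) / 2) - 1) ^ 2

/-- `EngS K` is the larger squared modulus among the nearest neighbors of a
largest-energy corner point of the modified `2^K`-ary QAM constellation
(with the convention `EngS 2 = EngS 3 = 2`). -/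
noncomputable def EngS (K : ℕ) : ℝ :=
  if K = 2 then 2
  else if K = 3 then 2
  else if K % 2 = 0 then ((2 : ℝ) ^ (K / 2) - 1) ^ 2 + ((2 : ℝ) ^ (K / 2) - 3) ^ 2
  else ((2 : ℝ) ^ ((K - 1) / 2) - 3) ^ 2 + (3 * (2 : ℝ) ^ ((K - 3) / 2) - 1) ^ 2


/-- The coding gain of the unitary training code built from the `2^p`-ary and
`2^q`-ary QAM constellations at energy scale `α`. -/
noncomputable def fGain (p q : ℕ) (α : ℝ) : ℝ :=
  4 * α ^ 2 / ((1 + α ^ 2 * (Eng p + Eng q)) * (1 + α ^ 2 * (Eng p + EngS q)))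

/-- The optimal coding gain over the energy scale. -/
noncomputable def gGain (p q : ℕ) : ℝ :=
  4 / (Real.sqrt (Eng p + Eng q) + Real.sqrt (Eng p + EngS q)) ^ 2

lemma Eng_two : Eng 2 = 2 := by norm_num [Eng]
lemma Eng_three : Eng 3 = 10 := by norm_num [Eng]
lemma EngS_two : EngS 2 = 2 := by norm_num [EngS]
lemma EngS_three : EngS 3 = 2 := by norm_num [EngS]

lemma Eng_even (m : ℕ) : Eng (2*m+4) = 2*((2:ℝ)^(m+2) - 1)^2 := by
  unfold Eng
  rw [if_neg (by omega), if_neg (by omega), if_pos (by omega),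
    show (2*m+4)/2 = m+2 from by omega]

lemma Eng_odd (m : ℕ) : Eng (2*m+5) = ((2:ℝ)^(m+2) - 1)^2 + (3*(2:ℝ)^(m+1) - 1)^2 := by
  unfold Eng
  rw [if_neg (by omega), if_neg (by omega), if_neg (by omega),
    show (2*m+5-1)/2 = m+2 from by omega, show (2*m+5-3)/2 = m+1 from by omega]

lemma EngS_even (m : ℕ) : EngS (2*m+4) = ((2:ℝ)^(m+2) - 1)^2 + ((2:ℝ)^(m+2) - 3)^2 := by
  unfold EngS
  rw [if_neg (by omega), if_neg (by omega), if_pos (by omega),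
    show (2*m+4)/2 = m+2 from by omega]

lemma EngS_odd (m : ℕ) : EngS (2*m+5) = ((2:ℝ)^(m+2) - 3)^2 + (3*(2:ℝ)^(m+1) - 1)^2 := by
  unfold EngS
  rw [if_neg (by omega), if_neg (by omega), if_neg (by omega),
    show (2*m+5-1)/2 = m+2 from by omega, show (2*m+5-3)/2 = m+1 from by omega]

lemma Kcases (K : ℕ) (h : 2 ≤ K) : K = 2 ∨ K = 3 ∨ (∃ m, K = 2*m+4) ∨ (∃ m, K = 2*m+5) := by
  rcases Nat.even_or_odd K with ⟨n, hn⟩ | ⟨n, hn⟩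
  · rcases Nat.lt_or_ge n 2 with h2 | h2
    · left; omega
    · right; right; left; exact ⟨n - 2, by omega⟩
  · rcases Nat.lt_or_ge n 2 with h2 | h2
    · right; left; omega
    · right; right; right; exact ⟨n - 2, by omega⟩

lemma pow_facts (m : ℕ) : (1:ℝ) ≤ 2^m ∧ (2:ℝ)^(m+1) = 2*2^m ∧ (2:ℝ)^(m+2) = 4*2^m ∧ (2:ℝ)^(m+3) = 8*2^m := by
  refine ⟨one_le_pow₀ (by norm_num), ?_, ?_, ?_⟩ <;> ring

lemma Eng_pos (K : ℕ) (h : 2 ≤ K) : 0 < Eng K := by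
  rcases Kcases K h with rfl | rfl | ⟨m, rfl⟩ | ⟨m, rfl⟩
  · rw [Eng_two]; norm_num
  · rw [Eng_three]; norm_num
  · obtain ⟨h1, h2, h3, h4⟩ := pow_facts m
    rw [Eng_even, h3]; nlinarith
  · obtain ⟨h1, h2, h3, h4⟩ := pow_facts m
    rw [Eng_odd, h3, h2]; nlinarith

lemma EngS_pos (K : ℕ) (h : 2 ≤ K) : 0 < EngS K := by
  rcases Kcases K h with rfl | rfl | ⟨m, rfl⟩ | ⟨m, rfl⟩
  · rw [EngS_two]; norm_num
  · rw [EngS_three]; norm_num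
  · obtain ⟨h1, h2, h3, h4⟩ := pow_facts m
    rw [EngS_even, h3]; nlinarith
  · obtain ⟨h1, h2, h3, h4⟩ := pow_facts m
    rw [EngS_odd, h3, h2]; nlinarith

lemma Econv (K : ℕ) (h : 2 ≤ K) : 2 * Eng (K+1) ≤ Eng K + Eng (K+2) := by
  rcases Kcases K h with rfl | rfl | ⟨m, rfl⟩ | ⟨m, rfl⟩
  · rw [Eng_two, Eng_three, show Eng (2+2) = Eng (2*0+4) from rfl, Eng_even]; norm_num
  · rw [Eng_three, show Eng (3+1) = Eng (2*0+4) from rfl, Eng_even,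
      show Eng (3+2) = Eng (2*0+5) from rfl, Eng_odd]
    norm_num
  · obtain ⟨h1, h2, h3, h4⟩ := pow_facts m
    rw [show 2*m+4+1 = 2*m+5 from by ring, show 2*m+4+2 = 2*(m+1)+4 from by ring,
      Eng_even, Eng_odd, Eng_even, h3, h2, show m+1+2 = m+3 from by ring, h4]
    nlinarith
  · obtain ⟨h1, h2, h3, h4⟩ := pow_facts m
    rw [show 2*m+5+1 = 2*(m+1)+4 from by ring, show 2*m+5+2 = 2*(m+1)+5 from by ring,
      Eng_odd, Eng_even, Eng_odd, h3, h2, show m+1+2 = m+3 from by ring, h4]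
    nlinarith

lemma DSD (q : ℕ) (h : 2 ≤ q) : EngS (q+1) + Eng q ≤ Eng (q+1) + EngS q := by
  rcases Kcases q h with rfl | rfl | ⟨m, rfl⟩ | ⟨m, rfl⟩
  · rw [EngS_three, Eng_two, Eng_three, EngS_two]; norm_num
  · rw [show (3:ℕ)+1 = 2*0+4 from rfl, EngS_even, Eng_even, Eng_three, EngS_three]; norm_num
  · obtain ⟨h1, h2, h3, h4⟩ := pow_facts m
    rw [show 2*m+4+1 = 2*m+5 from by ring, EngS_odd, Eng_even, Eng_odd, EngS_even, h3, h2]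
    nlinarith
  · obtain ⟨h1, h2, h3, h4⟩ := pow_facts m
    rw [show 2*m+5+1 = 2*(m+1)+4 from by ring, EngS_even, Eng_odd, Eng_even, EngS_odd,
      h3, h2, show m+1+2 = m+3 from by ring, h4]
    nlinarith

lemma Dmono (q b : ℕ) (hq : 2 ≤ q) (hb : q ≤ b) : Eng (q+1) + Eng b ≤ Eng q + Eng (b+1) := by
  induction b, hb using Nat.le_induction with
  | base => linarith
  | succ b hb ih =>
      have := Econv b (le_trans hq hb)
      linarith

lemma stepE (q b : ℕ) (hq : 2 ≤ q) (hb : q+1 ≤ b) :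
    Eng b + Eng (q+1) ≤ Eng (b+1) + Eng q := by
  have := Dmono q b hq (by omega); linarith

lemma stepS (q b : ℕ) (hq : 2 ≤ q) (hb : q+1 ≤ b) :
    Eng b + EngS (q+1) ≤ Eng (b+1) + EngS q := by
  have h1 := Dmono q b hq (by omega)
  have h2 := DSD q hq
  linarith

lemma gAnti (p q p' q' : ℕ) (hp' : 2 ≤ p') (hq' : 2 ≤ q')
    (h1 : Eng p' + Eng q' ≤ Eng p + Eng q)
    (h2 : Eng p' + EngS q' ≤ Eng p + EngS q) :
    gGain p q ≤ gGain p' q' := by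
  unfold gGain
  have hA' : 0 < Eng p' + Eng q' := add_pos (Eng_pos _ hp') (Eng_pos _ hq')
  have hB' : 0 < Eng p' + EngS q' := add_pos (Eng_pos _ hp') (EngS_pos _ hq')
  have d1 : 0 < Real.sqrt (Eng p' + Eng q') := Real.sqrt_pos.2 hA'
  have d2 : 0 < Real.sqrt (Eng p' + EngS q') := Real.sqrt_pos.2 hB'
  apply div_le_div_of_nonneg_left (by norm_num) (by positivity)
  apply pow_le_pow_left₀ (by positivity)
  exact add_le_add (Real.sqrt_le_sqrt h1) (Real.sqrt_le_sqrt h2)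



lemma gmain (r : ℕ) (hr : 4 ≤ r) :
    ∀ k p q : ℕ, 2 ≤ q → q ≤ p → p + q = r → p = (r+1)/2 + k →
      gGain p q ≤ gGain ((r+1)/2) (r/2) := by
  intro k
  induction k with
  | zero =>
      intro p q hq hqp hs hp
      rw [show p = (r+1)/2 from by omega, show q = r/2 from by omega]
  | succ k ih =>
      intro p q hq hqp hs hp
      have hq2 : q + 2 ≤ p := by omega
      have h1 := stepE q (p-1) hq (by omega)
      have h2 := stepS q (p-1) hq (by omega)
      rw [show p-1+1 = p from by omega] at h1 h2
      calc gGain p q ≤ gGain (p-1) (q+1) :=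
            gAnti p q (p-1) (q+1) (by omega) (by omega) h1 h2
        _ ≤ gGain ((r+1)/2) (r/2) :=
            ih (p-1) (q+1) (by omega) (by omega) (by omega) (by omega)


/-- Among all splits `p + q = r` with `p ≥ q ≥ 2`, the optimal coding gain
`g(p, q)` of the unitary training code is maximized by the balanced split
`(p̃, q̃) = ((r+1)/2, r/2)`; moreover for each split the supremum over `α > 0`
of the coding gain is `g(p, q)`, attained at
`α = ((E(p) + E(q)) (E(p) + E_s(q)))^{-1/4}`. -/
theorem coding_gain_balanced_split_optimal (r : ℕ) (hr : 4 ≤ r)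
    (p q : ℕ) (hq : 2 ≤ q) (hqp : q ≤ p) (hsum : p + q = r) :
    (∀ α : ℝ, 0 < α → fGain p q α ≤ gGain p q) ∧
    fGain p q (((Eng p + Eng q) * (Eng p + EngS q)) ^ (-(1 / 4 : ℝ))) =
      gGain p q ∧
    gGain p q ≤ gGain ((r + 1) / 2) (r / 2) := by
  have hp2 : 2 ≤ p := le_trans hq hqp
  have hA : 0 < Eng p + Eng q := add_pos (Eng_pos _ hp2) (Eng_pos _ hq)
  have hB : 0 < Eng p + EngS q := add_pos (Eng_pos _ hp2) (EngS_pos _ hq)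
  set a := Real.sqrt (Eng p + Eng q) with ha_def
  set b := Real.sqrt (Eng p + EngS q) with hb_def
  have ha : 0 < a := Real.sqrt_pos.2 hA
  have hb : 0 < b := Real.sqrt_pos.2 hB
  have hAa : Eng p + Eng q = a ^ 2 := (Real.sq_sqrt hA.le).symm
  have hBb : Eng p + EngS q = b ^ 2 := (Real.sq_sqrt hB.le).symm
  refine ⟨?_, ?_, ?_⟩
  · intro α hα
    unfold fGain gGain
    rw [hAa, hBb, Real.sqrt_sq ha.le, Real.sqrt_sq hb.le,
      div_le_div_iff₀ (by positivity) (by positivity)]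
    nlinarith [sq_nonneg (1 - α^2*a*b), sq_nonneg α, sq_nonneg (a-b), mul_pos ha hb,
      sq_nonneg (α*(a+b))]
  · unfold fGain gGain
    rw [hAa, hBb, Real.sqrt_sq ha.le, Real.sqrt_sq hb.le]
    have hab : (0:ℝ) < a * b := mul_pos ha hb
    have hα2 : ((a^2*b^2 : ℝ) ^ (-(1/4 : ℝ)))^2 = (a*b)⁻¹ := by
      rw [show a^2*b^2 = (a*b)^2 by ring,
        ← Real.rpow_natCast ((((a*b):ℝ)^2) ^ (-(1/4 : ℝ))) 2,
        ← Real.rpow_mul (by positivity),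
        show ((a*b):ℝ)^2 = (a*b) ^ ((2:ℕ):ℝ) from (Real.rpow_natCast _ 2).symm,
        ← Real.rpow_mul hab.le]
      norm_num [Real.rpow_neg_one]
    rw [hα2]
    have h1 : 1 + (a*b)⁻¹ * a^2 = (b + a)/b := by
      field_simp
    have h2 : 1 + (a*b)⁻¹ * b^2 = (a + b)/a := by
      field_simp
    rw [h1, h2]
    rw [div_eq_div_iff (by positivity) (by positivity)]
    field_simp
    ring
  · exact gmain r hr (p - (r+1)/2) p q hq hqp hsum (by omega)
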